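/- arXiv:1502.03035 — 8 statements merged into one kernel-verified Lean document; each statement's English description precedes it below -/
import Mathlib

section
/- Let m ≥ 1, let 0 ≤ ρ < 1, let Σ be the m×m equicorrelation matrix with parameter ρ, and let 0 < τ < 1. Then the 2m×2m block matrix Σ(τ) = [[Σ, τΣ],[τΣ, τΣ]] is invertible and its inverse Θ(τ) satisfies ‖Θ(τ)‖_{ℓ∞} ≤ (2/((1−τ)(1−ρ)))·max(2, (τ+1)/τ). -/
/-!
`Σ(τ)` is the Kronecker product `K ⊗ Σ` of `K = [[1, τ], [τ, τ]]` with `Σ`, so its inverse is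
`K⁻¹ ⊗ Σ⁻¹`, and the maximal absolute row sum of a Kronecker product is at most the product of
those of its factors. Here `K⁻¹ = (1 - τ)⁻¹ [[1, -1], [-1, 1/τ]]` has row sums `2 / (1 - τ)` and
`(τ + 1) / (τ (1 - τ))`, while `Σ = (1 - ρ) I + ρ J` (with `J` the all-ones matrix) has inverse
`(1 - ρ)⁻¹ (I - ρ / (1 + (m - 1) ρ) J)`, whose absolute row sums are at most `2 / (1 - ρ)`
when `0 ≤ ρ < 1`.
-/

open Matrix

namespace Matrix

section Ones

variable {n R : Type*} [Fintype n]

def ones (n R : Type*) [One R] : Matrix n n R := of fun _ _ => 1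

variable [Field R]

theorem ones_mul_ones : ones n R * ones n R = (Fintype.card n : R) • ones n R := by
  ext i j
  simp [ones, mul_apply]

variable [DecidableEq n]

theorem smul_one_add_smul_ones_mul (a b c d : R) :
    (a • 1 + b • ones n R) * (c • 1 + d • ones n R)
      = (a * c) • 1 + (a * d + b * c + Fintype.card n * b * d) • ones n R := by
  simp only [add_mul, Matrix.mul_add, Matrix.smul_mul, Matrix.mul_smul, Matrix.one_mul,
    Matrix.mul_one, ones_mul_ones]
  module

theorem smul_one_add_smul_ones_mul_inv {a b : R} (ha : a ≠ 0)
    (hab : a + b * Fintype.card n ≠ 0) :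
    (a • 1 + b • ones n R) * (a⁻¹ • 1 + (-b / (a * (a + b * Fintype.card n))) • ones n R) = 1 := by
  have hcoeff : a * (-b / (a * (a + b * Fintype.card n))) + b * a⁻¹
      + Fintype.card n * b * (-b / (a * (a + b * Fintype.card n))) = 0 := by
    field_simp
    ring
  rw [smul_one_add_smul_ones_mul, mul_inv_cancel₀ ha, hcoeff, one_smul, zero_smul, add_zero]

theorem sum_abs_smul_one_add_smul_ones_apply_le (c d : ℝ) (i : n) :
    ∑ j, |(c • 1 + d • ones n ℝ) i j| ≤ |c| + Fintype.card n * |d| := by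
  calc ∑ j, |(c • 1 + d • ones n ℝ) i j| ≤ ∑ j, (|c * (1 : Matrix n n ℝ) i j| + |d|) :=
        Finset.sum_le_sum fun j _ => by simpa [ones] using abs_add_le (c * (1 : Matrix n n ℝ) i j) d
    _ = |c| + Fintype.card n * |d| := by
        simp [Finset.sum_add_distrib, one_apply, apply_ite, Finset.sum_ite_eq]

theorem sum_abs_equicorrelation_inv_apply_le {ρ : ℝ} (hρ0 : 0 ≤ ρ) (hρ1 : ρ < 1) (i : n) :
    ∑ j, |((1 - ρ)⁻¹ • 1 + (-ρ / ((1 - ρ) * (1 - ρ + ρ * Fintype.card n))) • ones n ℝ) i j|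
      ≤ 2 / (1 - ρ) := by
  refine (sum_abs_smul_one_add_smul_ones_apply_le _ _ i).trans ?_
  have ha : 0 < 1 - ρ := by linarith
  rw [abs_of_pos (inv_pos.2 ha), abs_div, abs_neg, abs_of_nonneg hρ0, abs_of_pos (by positivity),
    inv_eq_one_div, mul_div_assoc', div_add_div _ _ ha.ne' (by positivity),
    div_le_div_iff₀ (by positivity) ha]
  -- after clearing denominators the two sides differ by `(1 - ρ) ^ 3`
  nlinarith [pow_pos ha 3]

end Ones

section BlockSmul

variable {l m n R : Type*}

/-- The Kronecker product `K ⊗ A`, indexed by `m ⊕ m` rather than `Fin 2 × m`. -/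
def blockSmul [Mul R] (K : Matrix (Fin 2) (Fin 2) R) (A : Matrix m n R) :
    Matrix (m ⊕ m) (n ⊕ n) R :=
  fromBlocks (K 0 0 • A) (K 0 1 • A) (K 1 0 • A) (K 1 1 • A)

theorem blockSmul_mul_blockSmul [Fintype m] [CommSemiring R] (K L : Matrix (Fin 2) (Fin 2) R)
    (A : Matrix l m R) (B : Matrix m n R) :
    blockSmul K A * blockSmul L B = blockSmul (K * L) (A * B) := by
  simp only [blockSmul, fromBlocks_multiply, Matrix.smul_mul, Matrix.mul_smul, smul_smul,
    ← add_smul, mul_apply, Fin.sum_univ_two, mul_comm (L _ _)]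

theorem blockSmul_one_one [DecidableEq m] [Semiring R] :
    blockSmul (1 : Matrix (Fin 2) (Fin 2) R) (1 : Matrix m m R) = 1 := by
  simp [blockSmul, fromBlocks_one]

theorem blockSmul_mul_blockSmul_eq_one [Fintype m] [DecidableEq m] [CommSemiring R]
    {K L : Matrix (Fin 2) (Fin 2) R} {A B : Matrix m m R} (hKL : K * L = 1) (hAB : A * B = 1) :
    blockSmul K A * blockSmul L B = 1 := by
  rw [blockSmul_mul_blockSmul, hKL, hAB, blockSmul_one_one]

theorem sum_abs_blockSmul_apply_le [Fintype n] {K : Matrix (Fin 2) (Fin 2) ℝ} {A : Matrix m n ℝ}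
    {κ α : ℝ} (hK : ∀ r, ∑ s, |K r s| ≤ κ) (hA : ∀ i, ∑ j, |A i j| ≤ α) (i : m ⊕ m) :
    ∑ j, |blockSmul K A i j| ≤ κ * α := by
  have hκ : 0 ≤ κ := (Finset.sum_nonneg fun s _ => abs_nonneg (K 0 s)).trans (hK 0)
  have hrow : ∀ r a, (|K r 0| + |K r 1|) * ∑ j, |A a j| ≤ κ * α := fun r a =>
    mul_le_mul (by simpa [Fin.sum_univ_two] using hK r) (hA a)
      (Finset.sum_nonneg fun j _ => abs_nonneg _) hκ
  rcases i with a | a <;>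
    simpa [blockSmul, Fintype.sum_sum_type, abs_mul, ← Finset.mul_sum, ← add_mul] using hrow _ a

end BlockSmul

end Matrix

/- `!![1, τ; τ, τ]` is the second-moment matrix of `(1, 𝟙{U ≤ τ})` for `U` uniform on `[0, 1]`. -/

theorem fin_two_threshold_mul_inv {τ : ℝ} (hτ0 : τ ≠ 0) (hτ1 : τ ≠ 1) :
    !![1, τ; τ, τ] * !![(1 - τ)⁻¹, -(1 - τ)⁻¹; -(1 - τ)⁻¹, (τ * (1 - τ))⁻¹] = 1 := by
  have : 1 - τ ≠ 0 := sub_ne_zero.2 hτ1.symm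
  ext i j
  fin_cases i <;> fin_cases j <;> simp [mul_apply, Fin.sum_univ_two] <;> field_simp <;> ring

theorem sum_abs_fin_two_threshold_inv_le {τ : ℝ} (hτ0 : 0 < τ) (hτ1 : τ < 1) (r : Fin 2) :
    ∑ s, |!![(1 - τ)⁻¹, -(1 - τ)⁻¹; -(1 - τ)⁻¹, (τ * (1 - τ))⁻¹] r s|
      ≤ max 2 ((τ + 1) / τ) / (1 - τ) := by
  have h1 : 0 < 1 - τ := by linarith
  rw [Fin.sum_univ_two]
  fin_cases r <;> simp only [Fin.zero_eta, Fin.mk_one, of_apply, cons_val', cons_val_zero,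
    cons_val_one, empty_val', cons_val_fin_one, abs_neg, abs_of_pos h1, abs_inv, abs_mul,
    abs_of_pos hτ0]
  · calc (1 - τ)⁻¹ + (1 - τ)⁻¹ = 2 / (1 - τ) := by ring
      _ ≤ _ := by gcongr; exact le_max_left _ _
  · calc (1 - τ)⁻¹ + (τ * (1 - τ))⁻¹ = (τ + 1) / τ / (1 - τ) := by field_simp
      _ ≤ _ := by gcongr; exact le_max_right _ _

theorem stmt_3_general (m : ℕ) (ρ : ℝ) (hρ0 : 0 ≤ ρ) (hρ1 : ρ < 1)
    (S : Matrix (Fin m) (Fin m) ℝ)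
    (hS : ∀ i j, S i j = if i = j then 1 else ρ)
    (τ : ℝ) (hτ0 : 0 < τ) (hτ1 : τ < 1) :
    IsUnit (Matrix.fromBlocks S (τ • S) (τ • S) (τ • S)) ∧
    (⨆ i, ∑ j, |(Matrix.fromBlocks S (τ • S) (τ • S) (τ • S))⁻¹ i j|)
      ≤ (2 / ((1 - τ) * (1 - ρ))) * max 2 ((τ + 1) / τ) := by
  have hS_eq : S = (1 - ρ) • 1 + ρ • ones (Fin m) ℝ := by
    ext i j
    rw [hS]
    split_ifs with h <;> simp [h, ones]
  have hS_inv := smul_one_add_smul_ones_mul_inv (n := Fin m) (sub_ne_zero.2 hρ1.ne')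
    (by positivity : 1 - ρ + ρ * Fintype.card (Fin m) ≠ 0)
  rw [← hS_eq] at hS_inv
  have hM : fromBlocks S (τ • S) (τ • S) (τ • S) = blockSmul !![1, τ; τ, τ] S := by
    simp [blockSmul]
  have hM_inv := blockSmul_mul_blockSmul_eq_one (fin_two_threshold_mul_inv hτ0.ne' hτ1.ne) hS_inv
  rw [hM, inv_eq_right_inv hM_inv]
  refine ⟨(isUnit_iff_isUnit_det _).2 (isUnit_det_of_right_inverse hM_inv), Real.iSup_le
    (fun i => (sum_abs_blockSmul_apply_le (sum_abs_fin_two_threshold_inv_le hτ0 hτ1)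
      (sum_abs_equicorrelation_inv_apply_le hρ0 hρ1) i).trans_eq ?_) (by positivity)⟩
  field_simp

/-- For the m×m equicorrelation matrix Σ with parameter 0 ≤ ρ < 1 (m ≥ 1)
and 0 < τ < 1, the block matrix Σ(τ) = [[Σ, τΣ],[τΣ, τΣ]] is invertible and its inverse
Θ(τ) satisfies ‖Θ(τ)‖_{ℓ∞} ≤ (2/((1−τ)(1−ρ)))·max(2, (τ+1)/τ). -/
theorem stmt_3 (m : ℕ) (hm : 1 ≤ m) (ρ : ℝ) (hρ0 : 0 ≤ ρ) (hρ1 : ρ < 1)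
    (S : Matrix (Fin m) (Fin m) ℝ)
    (hS : ∀ i j, S i j = if i = j then 1 else ρ)
    (τ : ℝ) (hτ0 : 0 < τ) (hτ1 : τ < 1) :
    IsUnit (Matrix.fromBlocks S (τ • S) (τ • S) (τ • S)) ∧
    (⨆ i, ∑ j, |(Matrix.fromBlocks S (τ • S) (τ • S) (τ • S))⁻¹ i j|)
      ≤ (2 / ((1 - τ) * (1 - ρ))) * max 2 ((τ + 1) / τ) :=
  stmt_3_general m ρ hρ0 hρ1 S hS τ hτ0 hτ1
end

section
/- Let m ≥ 1, let 0 ≤ ρ < 1, let Σ be the m×m equicorrelation matrix with parameter ρ, and let 0 < t₀ ≤ t₁ < 1. Then sup over τ ∈ [t₀,t₁] of ‖Σ(τ)^{−1}‖_{ℓ∞} is bounded above by the finite constant (2/((1−t₁)(1−ρ)))·max(2, (t₀+1)/t₀), which depends only on ρ, t₀ and t₁. -/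
/-!
`Σ(τ)` is the Kronecker product of `K = [[1, τ], [τ, τ]]` with `Σ`, so
`Σ(τ)⁻¹ = K⁻¹ ⊗ Σ⁻¹` where `K⁻¹ = (1 - τ)⁻¹ [[1, -1], [-1, τ⁻¹]]`, and the maximal absolute row
sum of `Σ(τ)⁻¹` is at most `max 2 (1 + τ⁻¹) / (1 - τ)` times that of `Σ⁻¹`; for `τ ∈ [t₀, t₁]`
the first factor is at most `max 2 (1 + t₀⁻¹) / (1 - t₁)`. The equicorrelation matrix is
`(1 - ρ) I + ρ J`, with inverse `(1 - ρ)⁻¹ (I - c J)` for `c = ρ / (1 + (m - 1) ρ)`, whose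
absolute row sums are at most `(1 - ρ)⁻¹ (1 + m c) ≤ 2 / (1 - ρ)`.
-/

open Matrix Finset

def equicorrelation (n : Type*) [DecidableEq n] (ρ : ℝ) : Matrix n n ℝ :=
  of fun i j => if i = j then 1 else ρ

theorem equicorrelation_apply {n : Type*} [DecidableEq n] (ρ : ℝ) (i j : n) :
    equicorrelation n ρ i j = (1 - ρ) * (1 : Matrix n n ℝ) i j + ρ := by
  by_cases h : i = j <;> simp [equicorrelation, one_apply, h]

variable {n : Type*} [Fintype n]

theorem sum_abs_fromBlocks_smul_le {B : Matrix n n ℝ} {R : ℝ} (hB : ∀ i, ∑ j, |B i j| ≤ R)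
    (p q r s : ℝ) (k : n ⊕ n) :
    ∑ l, |fromBlocks (p • B) (q • B) (r • B) (s • B) k l| ≤ max (|p| + |q|) (|r| + |s|) * R := by
  have hR : 0 ≤ R := by
    obtain i | i := k <;> exact (sum_nonneg fun j _ => abs_nonneg (B i j)).trans (hB i)
  have hrow (x y : ℝ) (i : n) : ∑ j, |x * B i j| + ∑ j, |y * B i j| ≤ (|x| + |y|) * R := by
    simp only [abs_mul, ← mul_sum, add_mul]
    gcongr <;> exact hB i
  rcases k with i | i <;>
    simp only [Fintype.sum_sum_type, fromBlocks_apply₁₁, fromBlocks_apply₁₂, fromBlocks_apply₂₁,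
      fromBlocks_apply₂₂, Matrix.smul_apply, smul_eq_mul]
  · exact (hrow p q i).trans (mul_le_mul_of_nonneg_right (le_max_left _ _) hR)
  · exact (hrow r s i).trans (mul_le_mul_of_nonneg_right (le_max_right _ _) hR)

theorem one_add_card_sub_one_mul_pos {ρ : ℝ} (hρ0 : 0 ≤ ρ) (hρ1 : ρ < 1) :
    0 < 1 + (Fintype.card n - 1 : ℝ) * ρ := by
  nlinarith [(Nat.cast_nonneg (Fintype.card n) : (0 : ℝ) ≤ _)]

variable [DecidableEq n]

theorem fromBlocks_smul_mul_fromBlocks_smul {R : Type*} [CommRing R] {A B : Matrix n n R}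
    (hAB : A * B = 1) {a b c d p q r s : R} (h : !![a, b; c, d] * !![p, q; r, s] = 1) :
    fromBlocks (a • A) (b • A) (c • A) (d • A) * fromBlocks (p • B) (q • B) (r • B) (s • B)
      = 1 := by
  simp [← Matrix.ext_iff, Fin.forall_fin_two] at h
  obtain ⟨⟨h₁, h₂⟩, h₃, h₄⟩ := h
  simp only [fromBlocks_multiply, smul_mul_smul_comm, hAB, ← add_smul, h₁, h₂, h₃, h₄,
    one_smul, zero_smul, fromBlocks_one]

theorem sum_abs_one_sub_le (c : ℝ) (i : n) :
    ∑ j, |(1 : Matrix n n ℝ) i j - c| ≤ 1 + Fintype.card n * |c| := calc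
  ∑ j, |(1 : Matrix n n ℝ) i j - c| ≤ ∑ j, (|(1 : Matrix n n ℝ) i j| + |c|) :=
    sum_le_sum fun j _ => abs_sub _ _
  _ = 1 + Fintype.card n * |c| := by simp [sum_add_distrib, one_apply, apply_ite]

theorem equicorrelation_mul_eq_one {ρ c : ℝ} (hρ : ρ ≠ 1)
    (hc : c * (1 + (Fintype.card n - 1) * ρ) = ρ) :
    equicorrelation n ρ * of (fun i j => (1 - ρ)⁻¹ * ((1 : Matrix n n ℝ) i j - c)) = 1 := by
  have h1ρ : 1 - ρ ≠ 0 := sub_ne_zero.mpr hρ.symm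
  ext i j
  have hcol : ∑ k, ((1 : Matrix n n ℝ) k j - c) = 1 - Fintype.card n * c := by
    simp [sum_sub_distrib, one_apply]
  have hrow : ∑ k, (1 : Matrix n n ℝ) i k * ((1 : Matrix n n ℝ) k j - c)
      = (1 : Matrix n n ℝ) i j - c := by
    simp [one_apply]
  simp only [mul_apply, equicorrelation_apply, of_apply, add_mul, sum_add_distrib]
  simp only [mul_left_comm _ (1 - ρ)⁻¹, mul_assoc, ← mul_sum, hcol, hrow]
  rw [← mul_add, inv_mul_eq_iff_eq_mul₀ h1ρ]
  linear_combination -hc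

theorem equicorrelation_inv {ρ : ℝ} (hρ : ρ ≠ 1) (hd : 1 + (Fintype.card n - 1) * ρ ≠ 0) :
    (equicorrelation n ρ)⁻¹ = of fun i j =>
      (1 - ρ)⁻¹ * ((1 : Matrix n n ℝ) i j - ρ / (1 + (Fintype.card n - 1) * ρ)) :=
  inv_eq_right_inv (equicorrelation_mul_eq_one hρ (div_mul_cancel₀ ρ hd))

section Equicorrelation

variable {ρ : ℝ} (hρ0 : 0 ≤ ρ) (hρ1 : ρ < 1)
include hρ0 hρ1

theorem equicorrelation_mul_inv : equicorrelation n ρ * (equicorrelation n ρ)⁻¹ = 1 := by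
  have hd := one_add_card_sub_one_mul_pos (n := n) hρ0 hρ1
  rw [equicorrelation_inv hρ1.ne hd.ne']
  exact equicorrelation_mul_eq_one hρ1.ne (div_mul_cancel₀ ρ hd.ne')

theorem sum_abs_equicorrelation_inv_le (i : n) :
    ∑ j, |(equicorrelation n ρ)⁻¹ i j| ≤ 2 / (1 - ρ) := by
  have hd := one_add_card_sub_one_mul_pos (n := n) hρ0 hρ1
  have h1ρ : 0 < 1 - ρ := sub_pos.mpr hρ1
  have hc : Fintype.card n * |ρ / (1 + (Fintype.card n - 1) * ρ)| ≤ 1 := by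
    rw [abs_of_nonneg (div_nonneg hρ0 hd.le), mul_div_assoc', div_le_one hd]
    linarith
  rw [equicorrelation_inv hρ1.ne hd.ne']
  simp only [of_apply, abs_mul, abs_inv, abs_of_pos h1ρ, ← mul_sum, inv_mul_le_iff₀ h1ρ,
    mul_div_cancel₀ _ h1ρ.ne']
  linarith [sum_abs_one_sub_le (ρ / (1 + (Fintype.card n - 1) * ρ)) i]

end Equicorrelation

theorem max_two_one_add_inv_div_le {t₀ t₁ τ : ℝ} (h0 : 0 < t₀) (hτ0 : t₀ ≤ τ) (hτ1 : τ ≤ t₁)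
    (h1 : t₁ < 1) : max 2 (1 + τ⁻¹) / (1 - τ) ≤ max 2 ((t₀ + 1) / t₀) / (1 - t₁) := by
  have hinv : 1 + τ⁻¹ ≤ (t₀ + 1) / t₀ := by
    rw [add_div, div_self h0.ne', one_div]
    gcongr
  exact div_le_div₀ (by positivity) (max_le_max le_rfl hinv) (by linarith) (by linarith)

theorem stmt_4_general (m : ℕ) (ρ : ℝ) (hρ0 : 0 ≤ ρ) (hρ1 : ρ < 1)
    (S : Matrix (Fin m) (Fin m) ℝ)
    (hS : ∀ i j, S i j = if i = j then 1 else ρ)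
    (t₀ t₁ : ℝ) (h0 : 0 < t₀) (h1 : t₁ < 1) :
    ∀ τ ∈ Set.Icc t₀ t₁,
      (⨆ i, ∑ j, |(Matrix.fromBlocks S (τ • S) (τ • S) (τ • S))⁻¹ i j|)
        ≤ (2 / ((1 - t₁) * (1 - ρ))) * max 2 ((t₀ + 1) / t₀) := by
  rintro τ ⟨hτ0, hτ1⟩
  obtain rfl : S = equicorrelation (Fin m) ρ := Matrix.ext hS
  have hτ : 0 < τ := h0.trans_le hτ0
  have h1τ : 0 < 1 - τ := by linarith
  have hK : !![1, τ; τ, τ] * !![(1 - τ)⁻¹, -(1 - τ)⁻¹; -(1 - τ)⁻¹, τ⁻¹ * (1 - τ)⁻¹] = 1 := by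
    ext i j; fin_cases i <;> fin_cases j <;> simp <;> field_simp <;> ring
  have hinv := inv_eq_right_inv
    (fromBlocks_smul_mul_fromBlocks_smul (equicorrelation_mul_inv (n := Fin m) hρ0 hρ1) hK)
  rw [one_smul] at hinv
  refine Real.iSup_le (fun k => ?_) (by positivity)
  rw [hinv]
  calc _ ≤ max (|(1 - τ)⁻¹| + |-(1 - τ)⁻¹|) (|-(1 - τ)⁻¹| + |τ⁻¹ * (1 - τ)⁻¹|) * (2 / (1 - ρ)) :=
        sum_abs_fromBlocks_smul_le (sum_abs_equicorrelation_inv_le hρ0 hρ1) _ _ _ _ k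
    _ = max 2 (1 + τ⁻¹) / (1 - τ) * (2 / (1 - ρ)) := by
        rw [abs_neg, abs_mul, abs_of_pos (inv_pos.2 hτ), abs_of_pos (inv_pos.2 h1τ),
          ← max_div_div_right h1τ.le]
        congr 2 <;> ring
    _ ≤ max 2 ((t₀ + 1) / t₀) / (1 - t₁) * (2 / (1 - ρ)) :=
        mul_le_mul_of_nonneg_right (max_two_one_add_inv_div_le h0 hτ0 hτ1 h1) (by positivity)
    _ = 2 / ((1 - t₁) * (1 - ρ)) * max 2 ((t₀ + 1) / t₀) := by field_simp

/-- For the m×m equicorrelation matrix Σ with parameter 0 ≤ ρ < 1 (m ≥ 1)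
and 0 < t₀ ≤ t₁ < 1, the quantity ‖Σ(τ)⁻¹‖_{ℓ∞} is bounded over τ ∈ [t₀,t₁] by the
finite constant (2/((1−t₁)(1−ρ)))·max(2, (t₀+1)/t₀), depending only on ρ, t₀, t₁. -/
theorem stmt_4 (m : ℕ) (hm : 1 ≤ m) (ρ : ℝ) (hρ0 : 0 ≤ ρ) (hρ1 : ρ < 1)
    (S : Matrix (Fin m) (Fin m) ℝ)
    (hS : ∀ i j, S i j = if i = j then 1 else ρ)
    (t₀ t₁ : ℝ) (h0 : 0 < t₀) (h01 : t₀ ≤ t₁) (h1 : t₁ < 1) :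
    ∀ τ ∈ Set.Icc t₀ t₁,
      (⨆ i, ∑ j, |(Matrix.fromBlocks S (τ • S) (τ • S) (τ • S))⁻¹ i j|)
        ≤ (2 / ((1 - t₁) * (1 - ρ))) * max 2 ((t₀ + 1) / t₀) :=
  stmt_4_general m ρ hρ0 hρ1 S hS t₀ t₁ h0 h1
end

section
/- Let n, p ≥ 1, let M be an n×p real matrix, let α₀, α̂ ∈ ℝ^p, U ∈ ℝⁿ, and set Y = Mα₀ + U. Let λ ≥ 0, let D be a diagonal p×p matrix, and let z ∈ ℝ^p with ‖z‖_{ℓ∞} ≤ 1 satisfy the stationarity (KKT) condition (1/n)·Mᵀ(Y − Mα̂) = λDz. Suppose Σ is an invertible p×p matrix with inverse Θ. Then ‖α̂ − α₀‖_{ℓ∞} ≤ ‖Θ‖_{ℓ∞}·( ‖Σ − (1/n)MᵀM‖_∞ · ‖α̂ − α₀‖_{ℓ1} + ‖(1/n)MᵀU‖_{ℓ∞} + λ·max_{1≤j≤p}|D_{jj}| ). -/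
open Matrix

/-- deterministic sup-norm bound from the KKT condition of the scaled Lasso
(core of the proof of Theorem 1 of the paper, case δ₀ = 0). -/
theorem stmt_6 (n p : ℕ) (hn : 1 ≤ n) (hp : 1 ≤ p)
    (M : Matrix (Fin n) (Fin p) ℝ) (α₀ αhat : Fin p → ℝ) (U Y : Fin n → ℝ)
    (hY : Y = M.mulVec α₀ + U)
    (lam : ℝ) (hlam : 0 ≤ lam)
    (D : Matrix (Fin p) (Fin p) ℝ) (hD : D.IsDiag)
    (z : Fin p → ℝ) (hz : (⨆ j, |z j|) ≤ 1)
    (hKKT : (1 / (n : ℝ)) • Mᵀ.mulVec (Y - M.mulVec αhat) = lam • D.mulVec z)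
    (S Θ : Matrix (Fin p) (Fin p) ℝ) (hSΘ : S * Θ = 1) (hΘS : Θ * S = 1) :
    (⨆ j, |αhat j - α₀ j|) ≤
      (⨆ i, ∑ j, |Θ i j|) *
        ((⨆ i, ⨆ j, |S i j - (1 / (n : ℝ)) * (Mᵀ * M) i j|) * (∑ j, |αhat j - α₀ j|)
          + (⨆ j, |((1 / (n : ℝ)) • Mᵀ.mulVec U) j|)
          + lam * (⨆ j, |D j j|)) := by
  haveI : Nonempty (Fin p) := ⟨⟨0, hp⟩⟩
  have bdd : ∀ (f : Fin p → ℝ), BddAbove (Set.range f) :=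
    fun f => (Set.finite_range f).bddAbove
  have le_isup : ∀ (f : Fin p → ℝ) (j : Fin p), f j ≤ ⨆ i, f i :=
    fun f j => le_ciSup (bdd f) j
  set v : Fin p → ℝ := αhat - α₀ with hvdef
  set G : Matrix (Fin p) (Fin p) ℝ := (1 / (n : ℝ)) • (Mᵀ * M) with hGdef
  set w : Fin p → ℝ := (1 / (n : ℝ)) • Mᵀ.mulVec U with hwdef
  -- KKT in shifted form
  have hKKT' : G.mulVec v = w - lam • D.mulVec z := by
    have h1 : Y - M.mulVec αhat = U - M.mulVec v := by
      rw [hY, hvdef, Matrix.mulVec_sub]; abel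
    have h2 := hKKT
    rw [h1, Matrix.mulVec_sub, smul_sub] at h2
    have h3 : G.mulVec v = (1 / (n : ℝ)) • Mᵀ.mulVec (M.mulVec v) := by
      rw [hGdef, Matrix.smul_mulVec, Matrix.mulVec_mulVec]
    rw [h3, eq_sub_iff_add_eq, hwdef]
    rw [sub_eq_iff_eq_add] at h2
    rw [h2]; abel
  set r : Fin p → ℝ := (S - G).mulVec v + (w - lam • D.mulVec z) with hrdef
  have hid : v = Θ.mulVec r := by
    have h4 : r = S.mulVec v := by
      rw [hrdef, Matrix.sub_mulVec, ← hKKT']; abel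
    rw [h4, Matrix.mulVec_mulVec, hΘS, Matrix.one_mulVec]
  set A : ℝ := ⨆ i, ⨆ j, |S i j - (1 / (n : ℝ)) * (Mᵀ * M) i j| with hAdef
  set B : ℝ := ⨆ j, |w j| with hBdef
  set Dm : ℝ := ⨆ j, |D j j| with hDmdef
  set T : ℝ := ⨆ i, ∑ j, |Θ i j| with hTdef
  have hA : ∀ i j, |(S - G) i j| ≤ A := by
    intro i j
    have he : (S - G) i j = S i j - (1 / (n : ℝ)) * (Mᵀ * M) i j := by
      simp [hGdef, Matrix.sub_apply, Matrix.smul_apply, smul_eq_mul]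
    rw [he]
    exact le_trans (le_isup (fun j' => |S i j' - (1 / (n : ℝ)) * (Mᵀ * M) i j'|) j)
      (le_isup (fun i' => ⨆ j', |S i' j' - (1 / (n : ℝ)) * (Mᵀ * M) i' j'|) i)
  have hAnn : 0 ≤ A := le_trans (abs_nonneg _) (hA ⟨0, hp⟩ ⟨0, hp⟩)
  have hB : ∀ j, |w j| ≤ B := fun j => le_isup (fun j' => |w j'|) j
  have hBnn : 0 ≤ B := le_trans (abs_nonneg _) (hB ⟨0, hp⟩)
  have hDm : ∀ j, |D j j| ≤ Dm := fun j => le_isup (fun j' => |D j' j'|) j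
  have hDmnn : 0 ≤ Dm := le_trans (abs_nonneg _) (hDm ⟨0, hp⟩)
  have hzj : ∀ j, |z j| ≤ 1 := fun j => le_trans (le_isup (fun j' => |z j'|) j) hz
  have hDz : ∀ j, (D.mulVec z) j = D j j * z j := by
    intro j
    rw [Matrix.mulVec, dotProduct]
    exact Finset.sum_eq_single_of_mem j (Finset.mem_univ j)
      (fun k _ hk => by rw [hD hk.symm, zero_mul])
  have hvnn : 0 ≤ ∑ k, |v k| := Finset.sum_nonneg fun k _ => abs_nonneg _
  set C : ℝ := A * (∑ k, |v k|) + B + lam * Dm with hCdef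
  have hCnn : 0 ≤ C := by
    have := mul_nonneg hAnn hvnn
    have := mul_nonneg hlam hDmnn
    rw [hCdef]; linarith
  have hr : ∀ j, |r j| ≤ C := by
    intro j
    have h1 : |((S - G).mulVec v) j| ≤ A * ∑ k, |v k| := by
      rw [Matrix.mulVec, dotProduct]
      calc |∑ k, (S - G) j k * v k| ≤ ∑ k, |(S - G) j k * v k| :=
            Finset.abs_sum_le_sum_abs _ _
        _ ≤ ∑ k, A * |v k| := by
            apply Finset.sum_le_sum
            intro k _
            rw [abs_mul]
            exact mul_le_mul_of_nonneg_right (hA j k) (abs_nonneg _)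
        _ = A * ∑ k, |v k| := by rw [Finset.mul_sum]
    have h2 : |(lam • D.mulVec z) j| ≤ lam * Dm := by
      have : (lam • D.mulVec z) j = lam * (D j j * z j) := by
        rw [Pi.smul_apply, smul_eq_mul, hDz]
      rw [this, abs_mul, abs_of_nonneg hlam, abs_mul]
      apply mul_le_mul_of_nonneg_left _ hlam
      calc |D j j| * |z j| ≤ |D j j| * 1 :=
            mul_le_mul_of_nonneg_left (hzj j) (abs_nonneg _)
        _ ≤ Dm := by rw [mul_one]; exact hDm j
    have h3 : |r j| ≤ |((S - G).mulVec v) j| + |w j| + |(lam • D.mulVec z) j| := by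
      have : r j = ((S - G).mulVec v) j + (w j - (lam • D.mulVec z) j) := rfl
      rw [this]
      calc |((S - G).mulVec v) j + (w j - (lam • D.mulVec z) j)|
          ≤ |((S - G).mulVec v) j| + |w j - (lam • D.mulVec z) j| := abs_add_le _ _
        _ ≤ |((S - G).mulVec v) j| + (|w j| + |(lam • D.mulVec z) j|) := by
            gcongr; exact abs_sub _ _
        _ = _ := by ring
    have := hB j
    rw [hCdef]; linarith
  have hvC : ∀ i, |v i| ≤ T * C := by
    intro i
    have h1 : |v i| ≤ (∑ j, |Θ i j|) * C := by
      rw [hid]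
      calc |(Θ.mulVec r) i| = |∑ j, Θ i j * r j| := by rw [Matrix.mulVec, dotProduct]
        _ ≤ ∑ j, |Θ i j * r j| := Finset.abs_sum_le_sum_abs _ _
        _ ≤ ∑ j, |Θ i j| * C := by
            apply Finset.sum_le_sum
            intro j _
            rw [abs_mul]
            exact mul_le_mul_of_nonneg_left (hr j) (abs_nonneg _)
        _ = (∑ j, |Θ i j|) * C := by rw [← Finset.sum_mul]
    have h2 : (∑ j, |Θ i j|) * C ≤ T * C :=
      mul_le_mul_of_nonneg_right (le_isup (fun i' => ∑ j, |Θ i' j|) i) hCnn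
    linarith
  have hfin : (⨆ j, |αhat j - α₀ j|) ≤ T * C := by
    apply ciSup_le
    intro j
    have : αhat j - α₀ j = v j := rfl
    rw [this]
    exact hvC j
  calc (⨆ j, |αhat j - α₀ j|) ≤ T * C := hfin
    _ = _ := by rw [hCdef, hAdef, hBdef, hDmdef, hTdef]; simp only [hvdef, Pi.sub_apply]
end

section
/- Let n, p ≥ 1, let M₀ and M̂ be n×p real matrices, let α₀, α̂ ∈ ℝ^p, U ∈ ℝⁿ, and set Y = M₀α₀ + U. Let λ ≥ 0, let D be a diagonal p×p matrix, and let z ∈ ℝ^p with ‖z‖_{ℓ∞} ≤ 1 satisfy the stationarity (KKT) condition (1/n)·M̂ᵀ(Y − M̂α̂) = λDz. Suppose Σ is an invertible p×p matrix with inverse Θ. Then ‖α̂ − α₀‖_{ℓ∞} ≤ ‖Θ‖_{ℓ∞}·( ‖(1/n)·M̂ᵀ(M₀ − M̂)α₀‖_{ℓ∞} + ‖Σ − (1/n)M̂ᵀM̂‖_∞ · ‖α̂ − α₀‖_{ℓ1} + ‖(1/n)M̂ᵀU‖_{ℓ∞} + λ·max_{1≤j≤p}|D_{jj}| ). -/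
open Matrix

/-- deterministic sup-norm bound from the KKT condition of the scaled Lasso
when the design M̂ at the estimated threshold differs from the true design M₀
(core of the proof of Theorem 2 of the paper, case δ₀ ≠ 0). -/
theorem stmt_7 (n p : ℕ) (hn : 1 ≤ n) (hp : 1 ≤ p)
    (M₀ Mhat : Matrix (Fin n) (Fin p) ℝ) (α₀ αhat : Fin p → ℝ) (U Y : Fin n → ℝ)
    (hY : Y = M₀.mulVec α₀ + U)
    (lam : ℝ) (hlam : 0 ≤ lam)
    (D : Matrix (Fin p) (Fin p) ℝ) (hD : D.IsDiag)
    (z : Fin p → ℝ) (hz : (⨆ j, |z j|) ≤ 1)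
    (hKKT : (1 / (n : ℝ)) • Mhatᵀ.mulVec (Y - Mhat.mulVec αhat) = lam • D.mulVec z)
    (S Θ : Matrix (Fin p) (Fin p) ℝ) (hSΘ : S * Θ = 1) (hΘS : Θ * S = 1) :
    (⨆ j, |αhat j - α₀ j|) ≤
      (⨆ i, ∑ j, |Θ i j|) *
        ((⨆ j, |((1 / (n : ℝ)) • Mhatᵀ.mulVec ((M₀ - Mhat).mulVec α₀)) j|)
          + (⨆ i, ⨆ j, |S i j - (1 / (n : ℝ)) * (Mhatᵀ * Mhat) i j|) * (∑ j, |αhat j - α₀ j|)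
          + (⨆ j, |((1 / (n : ℝ)) • Mhatᵀ.mulVec U) j|)
          + lam * (⨆ j, |D j j|)) := by
  have hpne : Nonempty (Fin p) := ⟨⟨0, hp⟩⟩
  -- rearranged KKT
  have e1 : (1/(n:ℝ)) • Mhatᵀ.mulVec (Mhat.mulVec αhat)
      = (1/(n:ℝ)) • Mhatᵀ.mulVec (M₀.mulVec α₀) + (1/(n:ℝ)) • Mhatᵀ.mulVec U
        - lam • D.mulVec z := by
    have h := hKKT
    rw [hY, show M₀.mulVec α₀ + U - Mhat.mulVec αhat
        = (M₀.mulVec α₀ + U) - Mhat.mulVec αhat from rfl,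
      mulVec_sub, mulVec_add, smul_sub, smul_add] at h
    rw [eq_sub_iff_add_eq, ← h]
    abel
  -- key vector identity
  have key : S.mulVec (αhat - α₀)
      = (S - (1/(n:ℝ)) • (Mhatᵀ * Mhat)).mulVec (αhat - α₀)
        + (1/(n:ℝ)) • Mhatᵀ.mulVec ((M₀ - Mhat).mulVec α₀)
        + (1/(n:ℝ)) • Mhatᵀ.mulVec U - lam • D.mulVec z := by
    have hG2 : ((1/(n:ℝ)) • (Mhatᵀ * Mhat)).mulVec (αhat - α₀)
        = (1/(n:ℝ)) • Mhatᵀ.mulVec (Mhat.mulVec αhat)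
          - (1/(n:ℝ)) • Mhatᵀ.mulVec (Mhat.mulVec α₀) := by
      rw [smul_mulVec, ← mulVec_mulVec, mulVec_sub, mulVec_sub, smul_sub]
    have hR1 : (1/(n:ℝ)) • Mhatᵀ.mulVec ((M₀ - Mhat).mulVec α₀)
        = (1/(n:ℝ)) • Mhatᵀ.mulVec (M₀.mulVec α₀)
          - (1/(n:ℝ)) • Mhatᵀ.mulVec (Mhat.mulVec α₀) := by
      rw [sub_mulVec, mulVec_sub, smul_sub]
    rw [sub_mulVec, hG2, e1, hR1]
    abel
  -- abbreviations via plain terms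
  have hDz : ∀ j, D.mulVec z j = D j j * z j := by
    intro j
    simp only [mulVec, dotProduct]
    exact Finset.sum_eq_single j (fun k _ hk => by rw [hD (Ne.symm hk), zero_mul])
      (fun h => absurd (Finset.mem_univ j) h)
  have lsup : ∀ (f : Fin p → ℝ) (j : Fin p), f j ≤ ⨆ j, f j := fun f j =>
    le_ciSup (Finite.bddAbove_range f) j
  have habs_z : ∀ j, |z j| ≤ 1 := fun j => le_trans (lsup (fun j => |z j|) j) hz
  have hDmax0 : (0:ℝ) ≤ ⨆ j, |D j j| := Real.iSup_nonneg fun _ => abs_nonneg _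
  have hE0 : (0:ℝ) ≤ ⨆ i, ⨆ j, |S i j - (1/(n:ℝ)) * (Mhatᵀ * Mhat) i j| :=
    Real.iSup_nonneg fun _ => Real.iSup_nonneg fun _ => abs_nonneg _
  have hB10 : (0:ℝ) ≤ ⨆ j, |((1/(n:ℝ)) • Mhatᵀ.mulVec ((M₀ - Mhat).mulVec α₀)) j| :=
    Real.iSup_nonneg fun _ => abs_nonneg _
  have hB20 : (0:ℝ) ≤ ⨆ j, |((1/(n:ℝ)) • Mhatᵀ.mulVec U) j| :=
    Real.iSup_nonneg fun _ => abs_nonneg _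
  have hL0 : (0:ℝ) ≤ ∑ j, |αhat j - α₀ j| :=
    Finset.sum_nonneg fun _ _ => abs_nonneg _
  have hC0 : (0:ℝ) ≤
      (⨆ j, |((1 / (n : ℝ)) • Mhatᵀ.mulVec ((M₀ - Mhat).mulVec α₀)) j|)
        + (⨆ i, ⨆ j, |S i j - (1 / (n : ℝ)) * (Mhatᵀ * Mhat) i j|) * (∑ j, |αhat j - α₀ j|)
        + (⨆ j, |((1 / (n : ℝ)) • Mhatᵀ.mulVec U) j|)
        + lam * (⨆ j, |D j j|) := by
    have := mul_nonneg hE0 hL0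
    have := mul_nonneg hlam hDmax0
    linarith
  -- pointwise bound on S.mulVec (αhat - α₀)
  have hW : ∀ j, |S.mulVec (αhat - α₀) j| ≤
      (⨆ j, |((1 / (n : ℝ)) • Mhatᵀ.mulVec ((M₀ - Mhat).mulVec α₀)) j|)
        + (⨆ i, ⨆ j, |S i j - (1 / (n : ℝ)) * (Mhatᵀ * Mhat) i j|) * (∑ j, |αhat j - α₀ j|)
        + (⨆ j, |((1 / (n : ℝ)) • Mhatᵀ.mulVec U) j|)
        + lam * (⨆ j, |D j j|) := by
    intro j
    have hkj := congrFun key j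
    simp only [Pi.add_apply, Pi.sub_apply, Pi.smul_apply, smul_eq_mul] at hkj
    -- bound term 1
    have t1 : |(S - (1/(n:ℝ)) • (Mhatᵀ * Mhat)).mulVec (αhat - α₀) j| ≤
        (⨆ i, ⨆ j, |S i j - (1/(n:ℝ)) * (Mhatᵀ * Mhat) i j|) * (∑ j, |αhat j - α₀ j|) := by
      have hEjk : ∀ k, |S j k - (1/(n:ℝ)) * (Mhatᵀ * Mhat) j k| ≤
          ⨆ i, ⨆ j', |S i j' - (1/(n:ℝ)) * (Mhatᵀ * Mhat) i j'| :=
        fun k => le_trans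
          (lsup (fun j' => |S j j' - (1/(n:ℝ)) * (Mhatᵀ * Mhat) j j'|) k)
          (lsup (fun i => ⨆ j', |S i j' - (1/(n:ℝ)) * (Mhatᵀ * Mhat) i j'|) j)
      calc |(S - (1/(n:ℝ)) • (Mhatᵀ * Mhat)).mulVec (αhat - α₀) j|
          = |∑ k, (S j k - (1/(n:ℝ)) * (Mhatᵀ * Mhat) j k) * (αhat k - α₀ k)| := by
            simp [mulVec, dotProduct, Matrix.sub_apply, Matrix.smul_apply, smul_eq_mul]
        _ ≤ ∑ k, |(S j k - (1/(n:ℝ)) * (Mhatᵀ * Mhat) j k) * (αhat k - α₀ k)| :=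
            Finset.abs_sum_le_sum_abs _ _
        _ ≤ ∑ k, (⨆ i, ⨆ j', |S i j' - (1/(n:ℝ)) * (Mhatᵀ * Mhat) i j'|) * |αhat k - α₀ k| := by
            refine Finset.sum_le_sum fun k _ => ?_
            rw [abs_mul]
            exact mul_le_mul_of_nonneg_right (hEjk k) (abs_nonneg _)
        _ = (⨆ i, ⨆ j', |S i j' - (1/(n:ℝ)) * (Mhatᵀ * Mhat) i j'|) * ∑ k, |αhat k - α₀ k| :=
            (Finset.mul_sum _ _ _).symm
    have t2 : |((1/(n:ℝ)) • Mhatᵀ.mulVec ((M₀ - Mhat).mulVec α₀)) j| ≤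
        ⨆ j, |((1/(n:ℝ)) • Mhatᵀ.mulVec ((M₀ - Mhat).mulVec α₀)) j| :=
      lsup (fun j => |((1/(n:ℝ)) • Mhatᵀ.mulVec ((M₀ - Mhat).mulVec α₀)) j|) j
    have t3 : |((1/(n:ℝ)) • Mhatᵀ.mulVec U) j| ≤ ⨆ j, |((1/(n:ℝ)) • Mhatᵀ.mulVec U) j| := lsup (fun j => |((1/(n:ℝ)) • Mhatᵀ.mulVec U) j|) j
    have t4 : lam * |D.mulVec z j| ≤ lam * (⨆ j, |D j j|) := by
      refine mul_le_mul_of_nonneg_left ?_ hlam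
      rw [hDz j, abs_mul]
      calc |D j j| * |z j| ≤ (⨆ j, |D j j|) * 1 :=
            mul_le_mul (lsup (fun j => |D j j|) j) (habs_z j)
              (abs_nonneg _) hDmax0
        _ = ⨆ j, |D j j| := mul_one _
    calc |S.mulVec (αhat - α₀) j|
        = |(S - (1/(n:ℝ)) • (Mhatᵀ * Mhat)).mulVec (αhat - α₀) j
            + ((1/(n:ℝ)) • Mhatᵀ.mulVec ((M₀ - Mhat).mulVec α₀)) j
            + ((1/(n:ℝ)) • Mhatᵀ.mulVec U) j - lam * D.mulVec z j| := by
          simp only [Pi.add_apply, Pi.sub_apply, Pi.smul_apply, smul_eq_mul] at *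
          rw [hkj]
      _ ≤ |(S - (1/(n:ℝ)) • (Mhatᵀ * Mhat)).mulVec (αhat - α₀) j
            + ((1/(n:ℝ)) • Mhatᵀ.mulVec ((M₀ - Mhat).mulVec α₀)) j
            + ((1/(n:ℝ)) • Mhatᵀ.mulVec U) j| + |lam * D.mulVec z j| := abs_sub _ _
      _ ≤ (|(S - (1/(n:ℝ)) • (Mhatᵀ * Mhat)).mulVec (αhat - α₀) j
            + ((1/(n:ℝ)) • Mhatᵀ.mulVec ((M₀ - Mhat).mulVec α₀)) j|
            + |((1/(n:ℝ)) • Mhatᵀ.mulVec U) j|) + |lam * D.mulVec z j| := by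
          gcongr
          exact abs_add_le _ _
      _ ≤ ((|(S - (1/(n:ℝ)) • (Mhatᵀ * Mhat)).mulVec (αhat - α₀) j|
            + |((1/(n:ℝ)) • Mhatᵀ.mulVec ((M₀ - Mhat).mulVec α₀)) j|)
            + |((1/(n:ℝ)) • Mhatᵀ.mulVec U) j|) + |lam * D.mulVec z j| := by
          gcongr
          exact abs_add_le _ _
      _ = |(S - (1/(n:ℝ)) • (Mhatᵀ * Mhat)).mulVec (αhat - α₀) j|
            + |((1/(n:ℝ)) • Mhatᵀ.mulVec ((M₀ - Mhat).mulVec α₀)) j|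
            + |((1/(n:ℝ)) • Mhatᵀ.mulVec U) j| + lam * |D.mulVec z j| := by
          rw [abs_mul, abs_of_nonneg hlam]
      _ ≤ _ := by
          have := t1; have := t2; have := t3; have := t4; linarith
  -- main bound
  refine ciSup_le fun i => ?_
  have hΔi : αhat i - α₀ i = Θ.mulVec (S.mulVec (αhat - α₀)) i := by
    rw [mulVec_mulVec, hΘS, one_mulVec, Pi.sub_apply]
  calc |αhat i - α₀ i| = |∑ j, Θ i j * S.mulVec (αhat - α₀) j| := by
        rw [hΔi]; simp [mulVec, dotProduct]
    _ ≤ ∑ j, |Θ i j| * |S.mulVec (αhat - α₀) j| := by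
        refine le_trans (Finset.abs_sum_le_sum_abs _ _) ?_
        simp [abs_mul]
    _ ≤ ∑ j, |Θ i j| *
        ((⨆ j, |((1 / (n : ℝ)) • Mhatᵀ.mulVec ((M₀ - Mhat).mulVec α₀)) j|)
          + (⨆ i, ⨆ j, |S i j - (1 / (n : ℝ)) * (Mhatᵀ * Mhat) i j|) * (∑ j, |αhat j - α₀ j|)
          + (⨆ j, |((1 / (n : ℝ)) • Mhatᵀ.mulVec U) j|)
          + lam * (⨆ j, |D j j|)) :=
        Finset.sum_le_sum fun j _ => mul_le_mul_of_nonneg_left (hW j) (abs_nonneg _)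
    _ = (∑ j, |Θ i j|) * _ := (Finset.sum_mul _ _ _).symm
    _ ≤ _ := mul_le_mul_of_nonneg_right (lsup (fun i => ∑ j, |Θ i j|) i) hC0
end

section
/- Let p ≥ 1, α₀, α̂ ∈ ℝ^p, and let C > 0 and λ > 0. Assume ‖α̂ − α₀‖_{ℓ∞} ≤ Cλ and that every nonzero coordinate of α₀ satisfies |α₀ⱼ| > 3Cλ. Then for every j ∈ {1,…,p}: |α̂ⱼ| ≥ 2Cλ if and only if α₀ⱼ ≠ 0. Consequently, the thresholded vector α̃ defined by α̃ⱼ = α̂ⱼ if |α̂ⱼ| ≥ 2Cλ and α̃ⱼ = 0 otherwise has exactly the same support as α₀, i.e., {j : α̃ⱼ ≠ 0} = {j : α₀ⱼ ≠ 0}. -/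
/-- if ‖α̂ − α₀‖_{ℓ∞} ≤ Cλ and every nonzero coordinate of α₀ exceeds 3Cλ
in absolute value, then thresholding α̂ at 2Cλ recovers exactly the support of α₀. -/
theorem stmt_8 (p : ℕ) (hp : 1 ≤ p) (α₀ αhat : Fin p → ℝ) (C lam : ℝ)
    (hC : 0 < C) (hlam : 0 < lam)
    (herr : (⨆ j, |αhat j - α₀ j|) ≤ C * lam)
    (hmin : ∀ j, α₀ j ≠ 0 → 3 * C * lam < |α₀ j|) :
    (∀ j, 2 * C * lam ≤ |αhat j| ↔ α₀ j ≠ 0) ∧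
    {j | (if 2 * C * lam ≤ |αhat j| then αhat j else 0) ≠ 0} = {j | α₀ j ≠ 0} := by
  have hCl : 0 < C * lam := mul_pos hC hlam
  have hpt : ∀ j, |αhat j - α₀ j| ≤ C * lam := by
    intro j
    refine le_trans ?_ herr
    exact le_ciSup (Set.Finite.bddAbove (Set.finite_range (fun j => |αhat j - α₀ j|))) j
  have key : ∀ j, 2 * C * lam ≤ |αhat j| ↔ α₀ j ≠ 0 := by
    intro j
    constructor
    · intro h hz
      have := hpt j
      rw [hz, sub_zero] at this
      nlinarith
    · intro hz
      have h3 := hmin j hz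
      have := hpt j
      have h1 : |α₀ j| - |αhat j - α₀ j| ≤ |αhat j| := by
        have := abs_sub_abs_le_abs_sub (α₀ j) (αhat j)
        have hsym : |α₀ j - αhat j| = |αhat j - α₀ j| := abs_sub_comm _ _
        linarith [abs_sub_abs_le_abs_sub (α₀ j) (αhat j), hsym ▸ (le_refl (|α₀ j - αhat j|))]
      nlinarith [abs_sub_abs_le_abs_sub (α₀ j) (αhat j), abs_sub_comm (α₀ j) (αhat j)]
  refine ⟨key, ?_⟩
  ext j
  simp only [Set.mem_setOf_eq]
  constructor
  · intro h
    by_contra hz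
    have : ¬ 2 * C * lam ≤ |αhat j| := fun hh => ((key j).1 hh) hz
    simp [this] at h
  · intro hz
    have hh := (key j).2 hz
    simp [hh]
    intro hzero
    rw [hzero] at hh
    simp at hh
    nlinarith
end

section
/- Let (Ω, F, P) be a probability space, p ≥ 1, α₀ ∈ ℝ^p a fixed vector, α̂ : Ω → ℝ^p a random vector, C > 0, λ > 0 and ε ∈ [0,1]. Assume P(‖α̂ − α₀‖_{ℓ∞} ≤ Cλ) ≥ 1 − ε and that min over j with α₀ⱼ ≠ 0 of |α₀ⱼ| > 3Cλ. Define the thresholded estimator α̃ coordinatewise by α̃ⱼ = α̂ⱼ if |α̂ⱼ| ≥ 2Cλ and α̃ⱼ = 0 otherwise. Then P( {j : α̃ⱼ ≠ 0} = {j : α₀ⱼ ≠ 0} ) ≥ 1 − ε. -/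
open MeasureTheory

/-- Theorem 3 of the paper: with probability at least 1 − ε the sup-norm error
is at most Cλ; if all nonzero coordinates of α₀ exceed 3Cλ, then with probability at least
1 − ε the estimator thresholded at 2Cλ has exactly the support of α₀. -/
theorem stmt_9 (Ω : Type*) [MeasurableSpace Ω] (P : Measure Ω) [IsProbabilityMeasure P]
    (p : ℕ) (hp : 1 ≤ p) (α₀ : Fin p → ℝ) (αhat : Ω → Fin p → ℝ)
    (C lam : ℝ) (hC : 0 < C) (hlam : 0 < lam)
    (ε : ℝ) (hε0 : 0 ≤ ε) (hε1 : ε ≤ 1)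
    (hP : ENNReal.ofReal (1 - ε) ≤ P {ω | (⨆ j, |αhat ω j - α₀ j|) ≤ C * lam})
    (hmin : ∀ j, α₀ j ≠ 0 → 3 * C * lam < |α₀ j|) :
    ENNReal.ofReal (1 - ε) ≤
      P {ω | {j | (if 2 * C * lam ≤ |αhat ω j| then αhat ω j else 0) ≠ 0}
              = {j | α₀ j ≠ 0}} := by
  refine hP.trans (measure_mono ?_)
  intro ω hω
  simp only [Set.mem_setOf_eq] at hω ⊢
  have hCl : 0 < C * lam := mul_pos hC hlam
  haveI : Nonempty (Fin p) := ⟨⟨0, hp⟩⟩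
  have hcoord : ∀ j, |αhat ω j - α₀ j| ≤ C * lam := fun j =>
    le_trans (le_ciSup (f := fun j => |αhat ω j - α₀ j|) (Set.Finite.bddAbove (Set.finite_range _)) j) hω
  ext j
  simp only [Set.mem_setOf_eq]
  constructor
  · intro h
    by_contra h0
    have : |αhat ω j| ≤ C * lam := by
      have := hcoord j; rw [h0] at this; simpa using this
    have hlt : ¬ (2 * C * lam ≤ |αhat ω j|) := by nlinarith
    simp [hlt] at h
  · intro h
    have h3 : 3 * C * lam < |α₀ j| := hmin j h
    have h2 : 2 * C * lam ≤ |αhat ω j| := by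
      have := hcoord j
      have := abs_sub_abs_le_abs_sub (α₀ j) (αhat ω j)
      rw [abs_sub_comm] at this
      nlinarith
    rw [if_pos h2]
    intro hz
    rw [hz] at h2
    simp at h2
    nlinarith
end

section
/- Let (Ω, F, P) be a probability space, m ≥ 1, δ₀ ∈ ℝ^m a fixed vector, δ̂ : Ω → ℝ^m a random vector, C > 0, λ > 0 and ε ∈ [0,1]. Assume P(‖δ̂ − δ₀‖_{ℓ∞} ≤ Cλ) ≥ 1 − ε and that min over j with δ₀ⱼ ≠ 0 of |δ₀ⱼ| > 3Cλ. Define the thresholded estimator δ̃ coordinatewise by δ̃ⱼ = δ̂ⱼ if |δ̂ⱼ| ≥ 2Cλ and δ̃ⱼ = 0 otherwise. Then P( {j : δ̃ⱼ ≠ 0} = {j : δ₀ⱼ ≠ 0} ) ≥ 1 − ε. In particular, with probability at least 1 − ε the thresholded estimator detects a break (some δ̃ⱼ ≠ 0) if and only if a break is present (some δ₀ⱼ ≠ 0). -/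
open MeasureTheory

/-- Theorem 4 of the paper, consistent break detection: with probability at
least 1 − ε the thresholded estimator δ̃ has exactly the support of δ₀; in particular, with
probability at least 1 − ε it detects a break (some δ̃ⱼ ≠ 0) iff a break is present (δ₀ ≠ 0). -/
theorem stmt_10 (Ω : Type*) [MeasurableSpace Ω] (P : Measure Ω) [IsProbabilityMeasure P]
    (m : ℕ) (hm : 1 ≤ m) (δ₀ : Fin m → ℝ) (δhat : Ω → Fin m → ℝ)
    (C lam : ℝ) (hC : 0 < C) (hlam : 0 < lam)
    (ε : ℝ) (hε0 : 0 ≤ ε) (hε1 : ε ≤ 1)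
    (hP : ENNReal.ofReal (1 - ε) ≤ P {ω | (⨆ j, |δhat ω j - δ₀ j|) ≤ C * lam})
    (hmin : ∀ j, δ₀ j ≠ 0 → 3 * C * lam < |δ₀ j|) :
    ENNReal.ofReal (1 - ε) ≤
      P {ω | {j | (if 2 * C * lam ≤ |δhat ω j| then δhat ω j else 0) ≠ 0}
              = {j | δ₀ j ≠ 0}} ∧
    ENNReal.ofReal (1 - ε) ≤
      P {ω | (∃ j, (if 2 * C * lam ≤ |δhat ω j| then δhat ω j else 0) ≠ 0)
              ↔ (∃ j, δ₀ j ≠ 0)} := by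
  have key : {ω | (⨆ j, |δhat ω j - δ₀ j|) ≤ C * lam} ⊆
      {ω | {j | (if 2 * C * lam ≤ |δhat ω j| then δhat ω j else 0) ≠ 0}
              = {j | δ₀ j ≠ 0}} := by
    intro ω hω
    have hb : ∀ j, |δhat ω j - δ₀ j| ≤ C * lam := fun j =>
      le_trans (le_ciSup (f := fun j => |δhat ω j - δ₀ j|) (Set.finite_range _).bddAbove j) hω
    have hCl : 0 < C * lam := mul_pos hC hlam
    show {j | (if 2 * C * lam ≤ |δhat ω j| then δhat ω j else 0) ≠ 0} = {j | δ₀ j ≠ 0}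
    ext j
    simp only [Set.mem_setOf_eq]
    have habs := abs_sub_abs_le_abs_sub (δhat ω j) (δ₀ j)
    have habs2 := abs_sub_abs_le_abs_sub (δ₀ j) (δhat ω j)
    rw [abs_sub_comm] at habs2
    constructor
    · intro h h0
      have hsm : |δhat ω j| ≤ C * lam := by simpa [h0] using hb j
      have : ¬ (2 * C * lam ≤ |δhat ω j|) := by intro hle; nlinarith
      rw [if_neg this] at h
      exact h rfl
    · intro h
      have h3 := hmin j h
      have hge : 2 * C * lam ≤ |δhat ω j| := by nlinarith [hb j]
      rw [if_pos hge]
      intro heq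
      rw [heq, abs_zero] at hge
      nlinarith
  refine ⟨le_trans hP (measure_mono key), le_trans hP (measure_mono (key.trans ?_))⟩
  intro ω hω
  show (∃ j, (if 2 * C * lam ≤ |δhat ω j| then δhat ω j else 0) ≠ 0) ↔ (∃ j, δ₀ j ≠ 0)
  have heq : {j | (if 2 * C * lam ≤ |δhat ω j| then δhat ω j else 0) ≠ 0} = {j | δ₀ j ≠ 0} := hω
  constructor
  · rintro ⟨j, hj⟩
    exact ⟨j, (Set.ext_iff.mp heq j).mp hj⟩
  · rintro ⟨j, hj⟩
    exact ⟨j, (Set.ext_iff.mp heq j).mpr hj⟩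
end

section
/- Let (Ω, F, P) be a probability space and n ≥ 1, m ≥ 2. Let X_i : Ω → ℝ^m and Q_i : Ω → ℝ for i = 1,…,n be such that the pairs (X_i, Q_i) are i.i.d., X_1 is independent of Q_1, and Q_1 is uniformly distributed on [0,1]. Suppose there are constants a, b > 0 with P(|X_1^{(j)}| > t) ≤ a·e^{−bt²} for all t > 0 and all j = 1,…,m, and that min over j of E[(X_1^{(j)})²] ≥ σ² for some σ² > 0. Fix t₀ ∈ (0,1) and set r = σ²·t₀. Then there exists a constant c' > 0 depending only on a, b, σ² and t₀ such that P( min over j = 1,…,m of (1/n)·Σ_{i=1}^n (X_i^{(j)})²·1{Q_i < t₀} ≤ r/2 ) ≤ 2m·e^{−c'·n}. -/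
/-!
Truncate: `W = min (X⁽ʲ⁾², M) · 1{Q < t₀}` takes values in `[0, M]` and lies below the summand
of `‖X⁽ʲ⁾(t₀)‖ₙ²`. The subgaussian tail gives `E[(X⁽ʲ⁾² - M)₊] ≤ a e^{-bM} / b`, so for `M` large
truncation costs at most `σ² / 4`, and independence of `X` and the uniform `Q` gives
`E W ≥ (3/4) σ² t₀`. For variables in `[0, M]` convexity gives `E e^{-λW} ≤ exp (-E W / (2M))` at
`λ = log 2 / M`, so the Chernoff bound makes `P(Σᵢ Wᵢ ≤ n r / 2)` exponentially small with a rate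
that is positive because `log 2 < 3/4`. A union bound over the `m` coordinates finishes the proof.
-/

open MeasureTheory ProbabilityTheory Set Real

section Chernoff

variable {Ω : Type*} [MeasurableSpace Ω] {P : Measure Ω} [IsProbabilityMeasure P]

/-- Convexity: on `[0, M]` the exponential lies below its chord, which ends at
`exp (-log 2) = 1/2`. -/
lemma exp_neg_log_two_div_mul_le {M w : ℝ} (hM : 0 < M) (hw0 : 0 ≤ w) (hwM : w ≤ M) :
    exp (-(log 2 / M) * w) ≤ 1 - w / (2 * M) := by
  have hθ0 : 0 ≤ w / M := div_nonneg hw0 hM.le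
  have hθ1 : w / M ≤ 1 := (div_le_one hM).mpr hwM
  have h := convexOn_exp.2 (mem_univ 0) (mem_univ (-log 2)) (sub_nonneg.2 hθ1) hθ0
    (sub_add_cancel 1 _)
  have harg : (1 - w / M) • (0 : ℝ) + (w / M) • -log 2 = -(log 2 / M) * w := by
    simp only [smul_eq_mul, mul_zero, zero_add]
    field_simp
  rw [harg, smul_eq_mul, smul_eq_mul, exp_zero, exp_neg, exp_log two_pos] at h
  refine h.trans_eq ?_
  field_simp
  ring

lemma integrable_exp_neg_mul_of_nonneg {Y : Ω → ℝ} {c : ℝ} (hY : Measurable Y) (hc : 0 ≤ c)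
    (h0 : ∀ ω, 0 ≤ Y ω) : Integrable (fun ω => exp (-c * Y ω)) P :=
  .of_bound (hY.const_mul _).exp.aestronglyMeasurable 1 <| ae_of_all _ fun ω => by
    rw [norm_of_nonneg (exp_nonneg _), exp_le_one_iff]
    nlinarith [h0 ω]

lemma mgf_neg_log_two_div_le {Y : Ω → ℝ} {M : ℝ} (hY : Measurable Y) (hM : 0 < M)
    (h0 : ∀ ω, 0 ≤ Y ω) (hYM : ∀ ω, Y ω ≤ M) :
    mgf Y P (-(log 2 / M)) ≤ exp (-(P[Y] / (2 * M))) := by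
  have hYint : Integrable Y P := .of_bound hY.aestronglyMeasurable M <| ae_of_all _ fun ω => by
    rw [norm_of_nonneg (h0 ω)]; exact hYM ω
  calc mgf Y P (-(log 2 / M)) ≤ ∫ ω, (1 - Y ω / (2 * M)) ∂P :=
        integral_mono (integrable_exp_neg_mul_of_nonneg hY (by positivity) h0)
          ((integrable_const 1).sub (hYint.div_const _))
          fun ω => exp_neg_log_two_div_mul_le hM (h0 ω) (hYM ω)
    _ = 1 - P[Y] / (2 * M) := by
        rw [integral_sub (integrable_const 1) (hYint.div_const _), integral_const, integral_div]
        simp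
    _ ≤ exp (-(P[Y] / (2 * M))) := by linarith [add_one_le_exp (-(P[Y] / (2 * M)))]

/-- The lower-tail Chernoff bound, taken at the parameter `log 2 / M`. -/
lemma measureReal_sum_le_le_exp {ι : Type*} [Fintype ι] {Y : ι → Ω → ℝ} {M μ s : ℝ}
    (hindep : iIndepFun Y P) (hY : ∀ i, Measurable (Y i)) (hM : 0 < M)
    (h0 : ∀ i ω, 0 ≤ Y i ω) (hYM : ∀ i ω, Y i ω ≤ M) (hμ : ∀ i, μ ≤ P[Y i]) :
    P.real {ω | ∑ i, Y i ω ≤ Fintype.card ι * s}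
      ≤ exp (-((μ / 2 - log 2 * s) / M) * Fintype.card ι) := by
  set t := log 2 / M
  have hsum : ∀ ω, (∑ i, Y i) ω = ∑ i, Y i ω := fun ω => Finset.sum_apply ω _ _
  have hint : Integrable (fun ω => exp (-t * (∑ i, Y i) ω)) P := by
    simp only [hsum]
    exact integrable_exp_neg_mul_of_nonneg (Finset.measurable_sum _ fun i _ => hY i)
      (by positivity) fun ω => Finset.sum_nonneg fun i _ => h0 i ω
  calc P.real {ω | ∑ i, Y i ω ≤ Fintype.card ι * s}
      ≤ exp (-(-t) * (Fintype.card ι * s)) * mgf (∑ i, Y i) P (-t) := by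
        simpa only [hsum] using measure_le_le_exp_mul_mgf _ (neg_nonpos.2 (by positivity)) hint
    _ = exp (t * (Fintype.card ι * s)) * ∏ i, mgf (Y i) P (-t) := by
        rw [hindep.mgf_sum hY, neg_neg]
    _ ≤ exp (t * (Fintype.card ι * s)) * ∏ _i : ι, exp (-(μ / (2 * M))) := by
        gcongr with i
        · exact fun i _ => mgf_nonneg
        · refine (mgf_neg_log_two_div_le (hY i) hM (h0 i) (hYM i)).trans ?_
          gcongr
          exact hμ i
    _ = exp (-((μ / 2 - log 2 * s) / M) * Fintype.card ι) := by
        rw [Finset.prod_const, Finset.card_univ, ← exp_nat_mul, ← exp_add]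
        congr 1
        simp only [t]
        field_simp
        ring

end Chernoff

lemma setOf_lt_max_sq_sub_eq {Ω : Type*} {Z : Ω → ℝ} {M t : ℝ} (hM : 0 ≤ M) (ht : 0 < t) :
    {ω | t < max (Z ω ^ 2 - M) 0} = {ω | √(M + t) < |Z ω|} := by
  ext ω
  change t < max (Z ω ^ 2 - M) 0 ↔ √(M + t) < |Z ω|
  rw [← sqrt_sq_eq_abs, sqrt_lt_sqrt_iff (by linarith), lt_max_iff, or_iff_left ht.not_gt]
  constructor <;> intro h <;> linarith

section Truncation

variable {Ω : Type*} [MeasurableSpace Ω] {P : Measure Ω} [IsProbabilityMeasure P]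

lemma integral_max_sq_sub_le {Z : Ω → ℝ} {a b M : ℝ}
    (hZ2 : Integrable (fun ω => Z ω ^ 2) P) (ha : 0 ≤ a) (hb : 0 < b) (hM : 0 ≤ M)
    (htail : ∀ t, 0 < t → P {ω | t < |Z ω|} ≤ ENNReal.ofReal (a * exp (-b * t ^ 2))) :
    ∫ ω, max (Z ω ^ 2 - M) 0 ∂P ≤ a * exp (-b * M) / b := by
  have hexcess : Integrable (fun ω => max (Z ω ^ 2 - M) 0) P :=
    (hZ2.sub (integrable_const M)).pos_part
  have hlevel : ∀ t ∈ Ioi (0 : ℝ),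
      P.real {ω | t < max (Z ω ^ 2 - M) 0} ≤ a * exp (-b * M) * exp (-b * t) := by
    intro t ht
    have hMt : 0 < M + t := by linarith [mem_Ioi.1 ht]
    rw [setOf_lt_max_sq_sub_eq hM ht, mul_assoc, ← exp_add, ← mul_add]
    refine ENNReal.toReal_le_of_le_ofReal (by positivity) ?_
    simpa only [sq_sqrt hMt.le] using htail √(M + t) (sqrt_pos.2 hMt)
  calc ∫ ω, max (Z ω ^ 2 - M) 0 ∂P
      = ∫ t in Ioi 0, P.real {ω | t < max (Z ω ^ 2 - M) 0} :=
        hexcess.integral_eq_integral_meas_lt (ae_of_all _ fun ω => le_max_right _ _)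
    _ ≤ ∫ t in Ioi 0, a * exp (-b * M) * exp (-b * t) :=
        integral_mono_of_nonneg (ae_of_all _ fun t => measureReal_nonneg)
          ((exp_neg_integrableOn_Ioi 0 hb).const_mul _)
          (ae_restrict_of_forall_mem measurableSet_Ioi hlevel)
    _ = a * exp (-b * M) / b := by
        rw [integral_const_mul, integral_exp_mul_Ioi (neg_neg_of_pos hb), mul_zero, exp_zero]
        field_simp

lemma integral_sq_sub_le_integral_min_sq {Z : Ω → ℝ} {a b M : ℝ}
    (hZ2 : Integrable (fun ω => Z ω ^ 2) P) (ha : 0 ≤ a) (hb : 0 < b) (hM : 0 ≤ M)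
    (htail : ∀ t, 0 < t → P {ω | t < |Z ω|} ≤ ENNReal.ofReal (a * exp (-b * t ^ 2))) :
    ∫ ω, Z ω ^ 2 ∂P - a * exp (-b * M) / b ≤ ∫ ω, min (Z ω ^ 2) M ∂P := by
  have hmin : (fun ω => min (Z ω ^ 2) M) = fun ω => Z ω ^ 2 - max (Z ω ^ 2 - M) 0 := by
    funext ω
    rcases le_total (Z ω ^ 2) M with h | h
    · rw [min_eq_left h, max_eq_right (by linarith), sub_zero]
    · rw [min_eq_right h, max_eq_left (by linarith), sub_sub_cancel]
  have hexcess : Integrable (fun ω => max (Z ω ^ 2 - M) 0) P :=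
    (hZ2.sub (integrable_const M)).pos_part
  rw [hmin, integral_sub hZ2 hexcess]
  linarith [integral_max_sq_sub_le hZ2 ha hb hM htail]

end Truncation

section Threshold

variable {Ω : Type*} [MeasurableSpace Ω] {P : Measure Ω}

lemma measureReal_preimage_Iio_of_map_eq_restrict_Icc {Q : Ω → ℝ} (hQ : Measurable Q)
    (hmap : P.map Q = volume.restrict (Icc 0 1)) {t : ℝ} (ht0 : 0 ≤ t) (ht1 : t ≤ 1) :
    P.real (Q ⁻¹' Iio t) = t := by
  have hinter : Iio t ∩ Icc 0 1 = Ico 0 t := by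
    ext x
    simp only [mem_inter_iff, mem_Iio, mem_Icc, mem_Ico]
    exact ⟨fun ⟨hxt, hx0, _⟩ => ⟨hx0, hxt⟩, fun ⟨hx0, hxt⟩ => ⟨hxt, hx0, by linarith⟩⟩
  rw [measureReal_def, ← Measure.map_apply hQ measurableSet_Iio, hmap,
    Measure.restrict_apply measurableSet_Iio, hinter, Real.volume_Ico, sub_zero,
    ENNReal.toReal_ofReal ht0]

/-- The summand `z² · 1{q < t₀}` of the thresholded column norm, with `z²` truncated at `M`. -/
noncomputable def truncSqBelow (M t₀ : ℝ) (p : ℝ × ℝ) : ℝ :=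
  min (p.1 ^ 2) M * if p.2 < t₀ then 1 else 0

lemma measurable_truncSqBelow (M t₀ : ℝ) : Measurable (truncSqBelow M t₀) :=
  ((measurable_fst.pow_const 2).min measurable_const).mul
    (Measurable.ite (measurableSet_lt measurable_snd measurable_const) measurable_const
      measurable_const)

lemma truncSqBelow_nonneg {M : ℝ} (t₀ : ℝ) (hM : 0 ≤ M) (p : ℝ × ℝ) :
    0 ≤ truncSqBelow M t₀ p :=
  mul_nonneg (le_min (sq_nonneg _) hM) (by split_ifs <;> norm_num)

lemma truncSqBelow_le {M : ℝ} (t₀ : ℝ) (hM : 0 ≤ M) (p : ℝ × ℝ) : truncSqBelow M t₀ p ≤ M := by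
  unfold truncSqBelow
  split_ifs
  · simp
  · simpa using hM

lemma truncSqBelow_le_sq_mul (M t₀ : ℝ) (p : ℝ × ℝ) :
    truncSqBelow M t₀ p ≤ p.1 ^ 2 * if p.2 < t₀ then 1 else 0 :=
  mul_le_mul_of_nonneg_right (min_le_left _ _) (by split_ifs <;> norm_num)

lemma integral_truncSqBelow_eq {Z Q : Ω → ℝ} {M t₀ : ℝ} (hZ : Measurable Z) (hQ : Measurable Q)
    (hindep : IndepFun Z Q P) (hmap : P.map Q = volume.restrict (Icc 0 1)) (ht0 : 0 ≤ t₀)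
    (ht1 : t₀ ≤ 1) :
    ∫ ω, truncSqBelow M t₀ (Z ω, Q ω) ∂P = (∫ ω, min (Z ω ^ 2) M ∂P) * t₀ := by
  have hf : Measurable fun z : ℝ => min (z ^ 2) M :=
    (measurable_id.pow_const 2).min measurable_const
  have hg : Measurable fun q : ℝ => if q < t₀ then (1 : ℝ) else 0 :=
    Measurable.ite (measurableSet_lt measurable_id measurable_const) measurable_const
      measurable_const
  have hindicator : (fun ω => if Q ω < t₀ then (1 : ℝ) else 0) = (Q ⁻¹' Iio t₀).indicator 1 :=
    rfl
  calc ∫ ω, truncSqBelow M t₀ (Z ω, Q ω) ∂P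
      = (∫ ω, min (Z ω ^ 2) M ∂P) * ∫ ω, (if Q ω < t₀ then (1 : ℝ) else 0) ∂P :=
        (hindep.comp hf hg).integral_fun_mul_eq_mul_integral (hf.comp hZ).aestronglyMeasurable
          (hg.comp hQ).aestronglyMeasurable
    _ = (∫ ω, min (Z ω ^ 2) M ∂P) * t₀ := by
        rw [hindicator, integral_indicator_one (hQ measurableSet_Iio),
          measureReal_preimage_Iio_of_map_eq_restrict_Icc hQ hmap ht0 ht1]

lemma integral_sq_sub_mul_le_integral_truncSqBelow [IsProbabilityMeasure P] {Z Q : Ω → ℝ}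
    {a b M t₀ : ℝ} (hZ : Measurable Z) (hQ : Measurable Q) (hindep : IndepFun Z Q P)
    (hmap : P.map Q = volume.restrict (Icc 0 1)) (ht0 : 0 ≤ t₀) (ht1 : t₀ ≤ 1)
    (hZ2 : Integrable (fun ω => Z ω ^ 2) P) (ha : 0 ≤ a) (hb : 0 < b) (hM : 0 ≤ M)
    (htail : ∀ t, 0 < t → P {ω | t < |Z ω|} ≤ ENNReal.ofReal (a * exp (-b * t ^ 2))) :
    (∫ ω, Z ω ^ 2 ∂P - a * exp (-b * M) / b) * t₀ ≤ ∫ ω, truncSqBelow M t₀ (Z ω, Q ω) ∂P := by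
  rw [integral_truncSqBelow_eq hZ hQ hindep hmap ht0 ht1]
  exact mul_le_mul_of_nonneg_right (integral_sq_sub_le_integral_min_sq hZ2 ha hb hM htail) ht0

lemma measure_mean_sq_indicator_le_le_exp [IsProbabilityMeasure P] {n : ℕ} (hn : 0 < n)
    {Z Q : Fin n → Ω → ℝ} {Z₀ Q₀ : Ω → ℝ} {M t₀ μ s : ℝ} (hM : 0 < M)
    (hZ : ∀ i, Measurable (Z i)) (hQ : ∀ i, Measurable (Q i))
    (hindep : iIndepFun (fun i ω => (Z i ω, Q i ω)) P)
    (hident : ∀ i, IdentDistrib (fun ω => (Z i ω, Q i ω)) (fun ω => (Z₀ ω, Q₀ ω)) P P)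
    (hμ : μ ≤ ∫ ω, truncSqBelow M t₀ (Z₀ ω, Q₀ ω) ∂P) :
    P {ω | (1 / (n : ℝ)) * ∑ i, Z i ω ^ 2 * (if Q i ω < t₀ then 1 else 0) ≤ s}
      ≤ ENNReal.ofReal (exp (-((μ / 2 - log 2 * s) / M) * n)) := by
  have hT := measurable_truncSqBelow M t₀
  have hchernoff := measureReal_sum_le_le_exp (s := s)
    (hindep.comp (fun _ => truncSqBelow M t₀) fun _ => hT)
    (fun i => hT.comp ((hZ i).prodMk (hQ i))) hM
    (fun _ _ => truncSqBelow_nonneg t₀ hM.le _) (fun _ _ => truncSqBelow_le t₀ hM.le _)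
    fun i => hμ.trans_eq ((hident i).comp hT).integral_eq.symm
  rw [Fintype.card_fin] at hchernoff
  have hsub : {ω | (1 / (n : ℝ)) * ∑ i, Z i ω ^ 2 * (if Q i ω < t₀ then 1 else 0) ≤ s}
      ⊆ {ω | ∑ i, truncSqBelow M t₀ (Z i ω, Q i ω) ≤ n * s} := fun ω (hω : _ * _ ≤ s) =>
    (Finset.sum_le_sum fun i _ => truncSqBelow_le_sq_mul M t₀ _).trans <| by
      rwa [one_div, inv_mul_le_iff₀ (Nat.cast_pos.2 hn)] at hω
  calc _ ≤ _ := measure_mono hsub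
    _ = ENNReal.ofReal (P.real {ω | ∑ i, truncSqBelow M t₀ (Z i ω, Q i ω) ≤ n * s}) :=
        (ofReal_measureReal (measure_ne_top P _)).symm
    _ ≤ _ := ENNReal.ofReal_le_ofReal hchernoff

end Threshold

lemma measure_setOf_exists_le_card_mul {Ω ι : Type*} [MeasurableSpace Ω] [Fintype ι]
    (P : Measure Ω) {p : ι → Ω → Prop} {ε : ℝ} (h : ∀ j, P {ω | p j ω} ≤ ENNReal.ofReal ε) :
    P {ω | ∃ j, p j ω} ≤ ENNReal.ofReal (Fintype.card ι * ε) := by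
  rw [ofPred_exists, ENNReal.ofReal_mul (Nat.cast_nonneg _), ENNReal.ofReal_natCast]
  calc P (⋃ j, {ω | p j ω}) ≤ ∑ j, P {ω | p j ω} := measure_iUnion_fintype_le P _
    _ ≤ ∑ _j : ι, ENNReal.ofReal ε := Finset.sum_le_sum fun j _ => h j
    _ = Fintype.card ι * ENNReal.ofReal ε := by
        rw [Finset.sum_const, Finset.card_univ, nsmul_eq_mul]

lemma exists_pos_mul_exp_neg_div_le (a : ℝ) {b ε : ℝ} (hb : 0 < b) (hε : 0 < ε) :
    ∃ M > 0, a * exp (-b * M) / b ≤ ε := by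
  have h : Filter.Tendsto (fun M => a * exp (-b * M) / b) Filter.atTop (nhds 0) := by
    simpa using ((tendsto_exp_neg_atTop_nhds_zero.comp
      (Filter.tendsto_id.const_mul_atTop hb)).const_mul a).div_const b
  obtain ⟨M, hMε, hM⟩ := ((h.eventually (ge_mem_nhds hε)).and (Filter.eventually_gt_atTop 0)).exists
  exact ⟨M, hM, hMε⟩

/-- second claim of Lemma 3 of the paper: under i.i.d. sampling, with X₁
independent of Q₁, Q₁ uniform on [0,1], uniformly subgaussian coordinates, and
min_j E[(X₁⁽ʲ⁾)²] ≥ σ², setting r = σ²t₀, there is c' > 0 depending only on a, b, σ², t₀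
with P( min_j (1/n)Σᵢ (Xᵢ⁽ʲ⁾)²1{Qᵢ<t₀} ≤ r/2 ) ≤ 2m·exp(−c'n). -/
theorem stmt_13 (a b sigSq t₀ : ℝ) (ha : 0 < a) (hb : 0 < b)
    (hsig : 0 < sigSq) (ht₀0 : 0 < t₀) (ht₀1 : t₀ < 1) :
    ∃ c' : ℝ, 0 < c' ∧
      ∀ (n m : ℕ) (hn : 1 ≤ n), 2 ≤ m →
      ∀ (Ω : Type) [MeasurableSpace Ω] (P : Measure Ω), IsProbabilityMeasure P →
      ∀ (X : Fin n → Ω → Fin m → ℝ) (Q : Fin n → Ω → ℝ),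
        (∀ i, Measurable (X i)) → (∀ i, Measurable (Q i)) →
        iIndepFun (fun i ω => (X i ω, Q i ω)) P →
        (∀ i : Fin n, IdentDistrib (fun ω => (X i ω, Q i ω))
            (fun ω => (X ⟨0, hn⟩ ω, Q ⟨0, hn⟩ ω)) P P) →
        IndepFun (X ⟨0, hn⟩) (Q ⟨0, hn⟩) P →
        Measure.map (Q ⟨0, hn⟩) P = volume.restrict (Set.Icc (0 : ℝ) 1) →
        (∀ j : Fin m, ∀ t : ℝ, 0 < t →
          P {ω | t < |X ⟨0, hn⟩ ω j|} ≤ ENNReal.ofReal (a * Real.exp (-b * t ^ 2))) →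
        (∀ j : Fin m, sigSq ≤ ∫ ω, (X ⟨0, hn⟩ ω j) ^ 2 ∂P) →
        P {ω | ∃ j : Fin m,
              (1 / (n : ℝ)) * ∑ i, (X i ω j) ^ 2 * (if Q i ω < t₀ then 1 else 0)
                ≤ sigSq * t₀ / 2}
          ≤ ENNReal.ofReal (2 * m * Real.exp (-c' * n)) := by
  obtain ⟨M, hM, hMtail⟩ := exists_pos_mul_exp_neg_div_le a hb (by positivity : 0 < sigSq / 4)
  set μ := 3 / 4 * sigSq * t₀
  set c := (μ / 2 - log 2 * (sigSq * t₀ / 2)) / M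
  have hc : 0 < c := by
    refine div_pos ?_ hM
    show 0 < 3 / 4 * sigSq * t₀ / 2 - log 2 * (sigSq * t₀ / 2)
    nlinarith [log_two_lt_d9, mul_pos hsig ht₀0]
  refine ⟨c, hc, fun n m hn _ Ω _ P _ X Q hX hQ hIndep hIdent hXQ hQmap htail hmom => ?_⟩
  have hcoord : ∀ j : Fin m, P {ω | (1 / (n : ℝ)) * ∑ i, (X i ω j) ^ 2 *
      (if Q i ω < t₀ then 1 else 0) ≤ sigSq * t₀ / 2} ≤ ENNReal.ofReal (exp (-c * n)) := by
    intro j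
    have hproj : Measurable fun p : (Fin m → ℝ) × ℝ => (p.1 j, p.2) := by fun_prop
    have hmean : μ ≤ ∫ ω, truncSqBelow M t₀ (X ⟨0, hn⟩ ω j, Q ⟨0, hn⟩ ω) ∂P :=
      (mul_le_mul_of_nonneg_right (by linarith [hmom j]) ht₀0.le).trans <|
        integral_sq_sub_mul_le_integral_truncSqBelow (measurable_pi_iff.1 (hX _) j) (hQ _)
          (hXQ.comp (measurable_pi_apply j) measurable_id) hQmap ht₀0.le ht₀1.le
          (.of_integral_ne_zero (hsig.trans_le (hmom j)).ne') ha.le hb hM.le (htail j)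
    exact measure_mean_sq_indicator_le_le_exp (Nat.lt_of_lt_of_le one_pos hn) hM
      (fun i => measurable_pi_iff.1 (hX i) j) hQ
      (hIndep.comp (fun _ p => (p.1 j, p.2)) fun _ => hproj) (fun i => (hIdent i).comp hproj) hmean
  refine (measure_setOf_exists_le_card_mul P hcoord).trans (ENNReal.ofReal_le_ofReal ?_)
  rw [Fintype.card_fin]
  nlinarith [mul_nonneg (Nat.cast_nonneg m) (exp_pos (-c * n)).le]
end
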